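/- Consider a 5-path-center configuration in a finite simple graph G. (1) If |A2| = 5, then G contains vertex-disjoint paths, each of order at least 4, covering at least 25 vertices in total. (2) If |A2| = 4, then G contains such paths covering at least 20 vertices in total. (3) If |A2| = 3, then G contains such paths covering at least 15 vertices in total, and if moreover A1 ∪ A2 = {1,2,3,4,5}, then at least 17 vertices in total. -/

import Mathlib

open SimpleGraph

/-- Degree of a vertex in a subgraph, via `Set.ncard` of the neighbor set. -/
noncomputable def subDeg {V : Type*} {G : SimpleGraph V} (H : G.Subgraph) (v : V) : ℕ :=
  (H.neighborSet v).ncard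

/-- A subgraph is a path: it is a single vertex, or it is connected with exactly two
vertices of degree 1 and all other vertices of degree 2. -/
def IsPathSubgraph {V : Type*} {G : SimpleGraph V} (P : G.Subgraph) : Prop :=
  P.Connected ∧
  ((∃ v, P.verts = {v}) ∨
    (({v ∈ P.verts | subDeg P v = 1}).ncard = 2 ∧
      ∀ v ∈ P.verts, subDeg P v = 1 ∨ subDeg P v = 2))

/-- `x` is an endpoint of the path subgraph `P` (for paths of order at least 2). -/
def IsPathEndpoint {V : Type*} {G : SimpleGraph V} (P : G.Subgraph) (x : V) : Prop :=
  x ∈ P.verts ∧ subDeg P x = 1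

/-- A matching of `G`: a finite set of edges of `G`, no two of which share an endpoint. -/
def IsMatchingSet {V : Type*} (G : SimpleGraph V) (M : Finset (Sym2 V)) : Prop :=
  ↑M ⊆ G.edgeSet ∧ ∀ e ∈ M, ∀ f ∈ M, e ≠ f → ∀ v : V, v ∈ e → v ∉ f

/-- A maximum matching of `G`. -/
def IsMaxMatchingSet {V : Type*} (G : SimpleGraph V) (M : Finset (Sym2 V)) : Prop :=
  IsMatchingSet G M ∧ ∀ M' : Finset (Sym2 V), IsMatchingSet G M' → M'.card ≤ M.card

/-- There is a collection of vertex-disjoint path subgraphs of `G`, each of order at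
least 4, whose total number of vertices `n` satisfies `p n`. -/
def HasDisjointPathsCovering {V : Type*} (G : SimpleGraph V) (p : ℕ → Prop) : Prop :=
  ∃ Ps : Set G.Subgraph,
    (∀ P ∈ Ps, IsPathSubgraph P ∧ 4 ≤ P.verts.ncard) ∧
    (Ps.Pairwise fun P Q => Disjoint P.verts Q.verts) ∧
    p ((⋃ P ∈ Ps, P.verts).ncard)

/-- There is a collection of vertex-disjoint path subgraphs of `G`, each of order at
least 4, covering at least `N` vertices in total. -/
def HasDisjointPathCover {V : Type*} (G : SimpleGraph V) (N : ℕ) : Prop :=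
  HasDisjointPathsCovering G fun n => N ≤ n

/-- `opt G`: the maximum total number of vertices in a collection of vertex-disjoint
paths of `G`, each of order at least 4. -/
noncomputable def optValue {V : Type*} (G : SimpleGraph V) : ℕ :=
  sSup {n : ℕ |
    ∃ Ps : Set G.Subgraph,
      (∀ P ∈ Ps, IsPathSubgraph P ∧ 4 ≤ P.verts.ncard) ∧
      (Ps.Pairwise fun P Q => Disjoint P.verts Q.verts) ∧
      n = (⋃ P ∈ Ps, P.verts).ncard}

/-- Degree of a vertex in the spanning subgraph determined by an edge set `F`. -/
noncomputable def edgeDeg {W : Type*} (F : Set (Sym2 W)) (v : W) : ℕ :=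
  {e ∈ F | v ∈ e}.ncard

/-- An edge set `C` saturates a vertex set `B` if some edge of `C` has an endpoint in `B`. -/
def Saturates {W : Type*} (C : Set (Sym2 W)) (B : Set W) : Prop :=
  ∃ e ∈ C, ∃ v ∈ B, v ∈ e

/-- A 5-path-center configuration in `G`: a path `v 0 – v 1 – v 2 – v 3 – v 4` in `G`
(indices `0,…,4` correspond to `v1,…,v5`), disjoint index sets `A1` (1-anchors) and
`A2` (2-anchors), pairwise disjoint sets `U i` avoiding the `v i`'s, for each
`i ∈ A1 ∪ A2` a path `Q i` of order at least 3 with endpoint `v i` and all other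
vertices in `U i`, and for each `i ∈ A2` additionally a path `P i` of order at least 5
with `v i ∈ V(P i) ⊆ {v i} ∪ U i`. -/
structure FivePathConfig {V : Type*} (G : SimpleGraph V) where
  v : Fin 5 → V
  inj : Function.Injective v
  adj : ∀ i : Fin 4, G.Adj (v i.castSucc) (v i.succ)
  A1 : Finset (Fin 5)
  A2 : Finset (Fin 5)
  hA : Disjoint A1 A2
  U : Fin 5 → Set V
  hUv : ∀ i ∈ A1 ∪ A2, Disjoint (U i) (Set.range v)
  hUdisj : ∀ i ∈ A1 ∪ A2, ∀ j ∈ A1 ∪ A2, i ≠ j → Disjoint (U i) (U j)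
  Q : Fin 5 → G.Subgraph
  hQpath : ∀ i ∈ A1 ∪ A2, IsPathSubgraph (Q i)
  hQcard : ∀ i ∈ A1 ∪ A2, 3 ≤ (Q i).verts.ncard
  hQend : ∀ i ∈ A1 ∪ A2, IsPathEndpoint (Q i) (v i)
  hQverts : ∀ i ∈ A1 ∪ A2, (Q i).verts ⊆ insert (v i) (U i)
  P : Fin 5 → G.Subgraph
  hPpath : ∀ i ∈ A2, IsPathSubgraph (P i)
  hPcard : ∀ i ∈ A2, 5 ≤ (P i).verts.ncard
  hPv : ∀ i ∈ A2, v i ∈ (P i).verts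
  hPverts : ∀ i ∈ A2, (P i).verts ⊆ insert (v i) (U i)

/-!
Every 2-anchor `i` carries its own path `P i` of order at least 5, and these paths lie in the
pairwise disjoint blocks `{v i} ∪ U i`; this already gives `5 |A2|` vertices. When every spine
vertex is an anchor, a spine edge `v i v j` joins `Q i` and `Q j` into a path of order at least
6 inside the blocks of `i` and `j`. Removing `v 0`, `v 2` or `v 4` from the spine leaves two spine
edges, and since `|A1| = 2` one of these three vertices is a 2-anchor `k`: the two joined paths
together with `P k` cover at least `6 + 6 + 5 = 17` vertices.
-/

section PathSubgraph

variable {V : Type*} {G : SimpleGraph V}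

lemma SimpleGraph.Subgraph.neighborSet_eq_empty_of_notMem {H : G.Subgraph} {x : V}
    (hx : x ∉ H.verts) : H.neighborSet x = ∅ :=
  Set.eq_empty_of_forall_notMem fun _ h => hx (H.edge_vert h)

lemma subDeg_sup_of_notMem_right {P Q : G.Subgraph} {x : V} (hx : x ∉ Q.verts) :
    subDeg (P ⊔ Q) x = subDeg P x := by
  rw [subDeg, Subgraph.neighborSet_sup, Q.neighborSet_eq_empty_of_notMem hx, Set.union_empty,
    subDeg]

lemma subDeg_sup_of_notMem_left {P Q : G.Subgraph} {x : V} (hx : x ∉ P.verts) :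
    subDeg (P ⊔ Q) x = subDeg Q x := by
  rw [sup_comm, subDeg_sup_of_notMem_right hx]

lemma IsPathEndpoint.sup_left {P Q : G.Subgraph} {x : V} (h : IsPathEndpoint P x)
    (hx : x ∉ Q.verts) : IsPathEndpoint (P ⊔ Q) x :=
  ⟨Or.inl h.1, (subDeg_sup_of_notMem_right hx).trans h.2⟩

lemma IsPathEndpoint.sup_right {P Q : G.Subgraph} {x : V} (h : IsPathEndpoint Q x)
    (hx : x ∉ P.verts) : IsPathEndpoint (P ⊔ Q) x :=
  ⟨Or.inr h.1, (subDeg_sup_of_notMem_left hx).trans h.2⟩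

lemma IsPathEndpoint.verts_ne_singleton {P : G.Subgraph} {x : V} (hx : IsPathEndpoint P x)
    (w : V) : P.verts ≠ {w} := by
  intro hw
  obtain ⟨y, hy⟩ := Set.nonempty_of_ncard_ne_zero (s := P.neighborSet x) (by
    rw [← subDeg, hx.2]; exact one_ne_zero)
  have hxw : x = w := by simpa [hw] using hx.1
  have hyw : y = w := by simpa [hw] using P.edge_vert hy.symm
  subst hxw hyw
  exact G.loopless.irrefl _ (P.adj_sub hy)

lemma IsPathSubgraph.endpoints_of_isPathEndpoint {P : G.Subgraph} {x : V}
    (hP : IsPathSubgraph P) (hx : IsPathEndpoint P x) :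
    {v ∈ P.verts | subDeg P v = 1}.ncard = 2 ∧
      ∀ v ∈ P.verts, subDeg P v = 1 ∨ subDeg P v = 2 :=
  hP.2.resolve_left fun ⟨w, hw⟩ => hx.verts_ne_singleton w hw

lemma subDeg_sup_of_inter_eq_singleton {P Q : G.Subgraph} {a : V} (haP : subDeg P a = 1)
    (haQ : subDeg Q a = 1) (hPQ : P.verts ∩ Q.verts = {a}) : subDeg (P ⊔ Q) a = 2 := by
  have hdisj : Disjoint (P.neighborSet a) (Q.neighborSet a) := by
    refine Set.disjoint_left.mpr fun w hwP hwQ => G.loopless.irrefl a (P.adj_sub ?_)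
    have hw : w ∈ P.verts ∩ Q.verts := ⟨P.edge_vert hwP.symm, Q.edge_vert hwQ.symm⟩
    rw [hPQ, Set.mem_singleton_iff] at hw
    exact hw ▸ hwP
  rw [subDeg, Subgraph.neighborSet_sup, Set.ncard_union_eq hdisj
    (Set.finite_of_ncard_ne_zero (by rw [← subDeg, haP]; exact one_ne_zero))
    (Set.finite_of_ncard_ne_zero (by rw [← subDeg, haQ]; exact one_ne_zero))]
  rw [← subDeg, ← subDeg, haP, haQ]

lemma IsPathSubgraph.sup_of_inter_eq_singleton {P Q : G.Subgraph} {a : V}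
    (hP : IsPathSubgraph P) (hQ : IsPathSubgraph Q) (haP : IsPathEndpoint P a)
    (haQ : IsPathEndpoint Q a) (hPQ : P.verts ∩ Q.verts = {a}) : IsPathSubgraph (P ⊔ Q) := by
  obtain ⟨hEP, hdegP⟩ := hP.endpoints_of_isPathEndpoint haP
  obtain ⟨hEQ, hdegQ⟩ := hQ.endpoints_of_isPathEndpoint haQ
  have eq_a : ∀ v ∈ P.verts, v ∈ Q.verts → v = a := fun v hvP hvQ =>
    Set.mem_singleton_iff.mp (hPQ ▸ ⟨hvP, hvQ⟩)
  have degP : ∀ v ∈ P.verts, v ≠ a → subDeg (P ⊔ Q) v = subDeg P v := fun v hv hva =>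
    subDeg_sup_of_notMem_right fun hvQ => hva (eq_a v hv hvQ)
  have degQ : ∀ v ∈ Q.verts, v ≠ a → subDeg (P ⊔ Q) v = subDeg Q v := fun v hv hva =>
    subDeg_sup_of_notMem_left fun hvP => hva (eq_a v hvP hv)
  have dega : subDeg (P ⊔ Q) a = 2 := subDeg_sup_of_inter_eq_singleton haP.2 haQ.2 hPQ
  have hends : {v ∈ (P ⊔ Q).verts | subDeg (P ⊔ Q) v = 1} =
      ({v ∈ P.verts | subDeg P v = 1} \ {a}) ∪ ({v ∈ Q.verts | subDeg Q v = 1} \ {a}) := by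
    ext v
    simp only [Subgraph.verts_sup, Set.mem_union, Set.mem_sdiff, Set.mem_singleton_iff]
    constructor
    · rintro ⟨hv | hv, hdeg⟩ <;> have hva : v ≠ a := by rintro rfl; omega
      · exact Or.inl ⟨⟨hv, degP v hv hva ▸ hdeg⟩, hva⟩
      · exact Or.inr ⟨⟨hv, degQ v hv hva ▸ hdeg⟩, hva⟩
    · rintro (⟨⟨hv, hdeg⟩, hva⟩ | ⟨⟨hv, hdeg⟩, hva⟩)
      · exact ⟨Or.inl hv, (degP v hv hva).trans hdeg⟩
      · exact ⟨Or.inr hv, (degQ v hv hva).trans hdeg⟩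
  have hEP' : ({v ∈ P.verts | subDeg P v = 1} \ {a}).ncard = 1 := by
    rw [Set.ncard_sdiff_singleton_of_mem (s := {v ∈ P.verts | subDeg P v = 1}) haP,
      hEP]
  have hEQ' : ({v ∈ Q.verts | subDeg Q v = 1} \ {a}).ncard = 1 := by
    rw [Set.ncard_sdiff_singleton_of_mem (s := {v ∈ Q.verts | subDeg Q v = 1}) haQ, hEQ]
  have hdisj : Disjoint ({v ∈ P.verts | subDeg P v = 1} \ {a})
      ({v ∈ Q.verts | subDeg Q v = 1} \ {a}) :=
    Set.disjoint_left.mpr fun v ⟨⟨hvP, _⟩, hva⟩ ⟨⟨hvQ, _⟩, _⟩ => hva (eq_a v hvP hvQ)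
  refine ⟨Subgraph.connected_sup hP.1.preconnected hQ.1.preconnected ⟨a, by
    rw [Subgraph.verts_inf, hPQ]; rfl⟩, Or.inr ⟨?_, ?_⟩⟩
  · rw [hends, Set.ncard_union_eq hdisj (Set.finite_of_ncard_ne_zero (by omega))
      (Set.finite_of_ncard_ne_zero (by omega)), hEP', hEQ']
  · rintro v (hv | hv) <;> by_cases hva : v = a
    · exact Or.inr (hva ▸ dega)
    · exact degP v hv hva ▸ hdegP v hv
    · exact Or.inr (hva ▸ dega)
    · exact degQ v hv hva ▸ hdegQ v hv

lemma isPathEndpoint_subgraphOfAdj_fst {a b : V} (h : G.Adj a b) :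
    IsPathEndpoint (G.subgraphOfAdj h) a :=
  ⟨Or.inl rfl, by rw [subDeg, neighborSet_fst_subgraphOfAdj, Set.ncard_singleton]⟩

lemma isPathEndpoint_subgraphOfAdj_snd {a b : V} (h : G.Adj a b) :
    IsPathEndpoint (G.subgraphOfAdj h) b :=
  ⟨Or.inr rfl, by rw [subDeg, neighborSet_snd_subgraphOfAdj, Set.ncard_singleton]⟩

lemma isPathSubgraph_subgraphOfAdj {a b : V} (h : G.Adj a b) :
    IsPathSubgraph (G.subgraphOfAdj h) := by
  have ha := isPathEndpoint_subgraphOfAdj_fst h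
  have hb := isPathEndpoint_subgraphOfAdj_snd h
  have hverts : (G.subgraphOfAdj h).verts = {a, b} := rfl
  have hends : {v ∈ (G.subgraphOfAdj h).verts | subDeg (G.subgraphOfAdj h) v = 1} = {a, b} :=
    Set.sep_eq_self_iff_mem_true.mpr <| by
      rintro v (rfl | rfl | _)
      exacts [ha.2, hb.2]
  refine ⟨Subgraph.subgraphOfAdj_connected h, Or.inr ⟨?_, ?_⟩⟩
  · rw [hends, Set.ncard_pair h.ne]
  · rintro v (rfl | rfl | _)
    exacts [Or.inl ha.2, Or.inl hb.2]

lemma IsPathSubgraph.exists_join {P Q : G.Subgraph} {a b : V} (hP : IsPathSubgraph P)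
    (hQ : IsPathSubgraph Q) (ha : IsPathEndpoint P a) (hb : IsPathEndpoint Q b)
    (hab : G.Adj a b) (hPQ : Disjoint P.verts Q.verts) :
    ∃ R : G.Subgraph, IsPathSubgraph R ∧ R.verts = P.verts ∪ Q.verts := by
  have hbP : b ∉ P.verts := Set.disjoint_right.mp hPQ hb.1
  set E := G.subgraphOfAdj hab
  have hPE : P.verts ∩ E.verts = {a} := by
    ext v
    simp only [E, subgraphOfAdj_verts, Set.mem_inter_iff, Set.mem_insert_iff,
      Set.mem_singleton_iff]
    constructor
    · rintro ⟨hv, rfl | rfl⟩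
      exacts [rfl, absurd hv hbP]
    · rintro rfl
      exact ⟨ha.1, Or.inl rfl⟩
  have hPEQ : (P ⊔ E).verts ∩ Q.verts = {b} := by
    ext v
    simp only [E, Subgraph.verts_sup, subgraphOfAdj_verts, Set.mem_inter_iff,
      Set.mem_union, Set.mem_insert_iff, Set.mem_singleton_iff]
    constructor
    · rintro ⟨hv | rfl | rfl, hvQ⟩
      exacts [absurd hvQ (Set.disjoint_left.mp hPQ hv), absurd hvQ (Set.disjoint_left.mp hPQ ha.1),
        rfl]
    · rintro rfl
      exact ⟨Or.inr (Or.inr rfl), hb.1⟩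
  have hE : IsPathEndpoint (P ⊔ E) b :=
    (isPathEndpoint_subgraphOfAdj_snd hab).sup_right hbP
  refine ⟨P ⊔ E ⊔ Q, ((hP.sup_of_inter_eq_singleton (isPathSubgraph_subgraphOfAdj hab) ha
    (isPathEndpoint_subgraphOfAdj_fst hab) hPE).sup_of_inter_eq_singleton hQ hE hb hPEQ), ?_⟩
  ext v
  simp only [E, Subgraph.verts_sup, subgraphOfAdj_verts, Set.mem_union,
    Set.mem_insert_iff, Set.mem_singleton_iff]
  constructor
  · rintro ((hv | rfl | rfl) | hv)
    exacts [Or.inl hv, Or.inl ha.1, Or.inr hb.1, Or.inr hv]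
  · rintro (hv | hv)
    exacts [Or.inl (Or.inl hv), Or.inr hv]

lemma hasDisjointPathCover_of_pairwiseDisjoint {ι : Type*} (s : Finset ι) (f : ι → G.Subgraph)
    (hf : ∀ i ∈ s, IsPathSubgraph (f i) ∧ 4 ≤ (f i).verts.ncard)
    (hdisj : (s : Set ι).PairwiseDisjoint fun i => (f i).verts) {N : ℕ}
    (hN : N ≤ ∑ i ∈ s, (f i).verts.ncard) : HasDisjointPathCover G N := by
  refine ⟨f '' s, ?_, ?_, ?_⟩
  · rintro _ ⟨i, hi, rfl⟩
    exact hf i hi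
  · rintro _ ⟨i, hi, rfl⟩ _ ⟨j, hj, rfl⟩ hne
    exact hdisj hi hj fun hij => hne (hij ▸ rfl)
  · rwa [Set.biUnion_image, s.finite_toSet.ncard_biUnion
      (fun i hi => Set.finite_of_ncard_pos (by have := (hf i hi).2; omega)) hdisj,
      finsum_mem_coe_finset]

end PathSubgraph

namespace FivePathConfig

variable {V : Type*} {G : SimpleGraph V} (cfg : FivePathConfig G)

def block (i : Fin 5) : Set V := insert (cfg.v i) (cfg.U i)

lemma disjoint_block {i j : Fin 5} (hi : i ∈ cfg.A1 ∪ cfg.A2) (hj : j ∈ cfg.A1 ∪ cfg.A2)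
    (hij : i ≠ j) : Disjoint (cfg.block i) (cfg.block j) := by
  have v_notMem_U : ∀ {k}, k ∈ cfg.A1 ∪ cfg.A2 → ∀ l, cfg.v l ∉ cfg.U k := fun hk l h =>
    Set.disjoint_left.mp (cfg.hUv _ hk) h ⟨l, rfl⟩
  refine Set.disjoint_left.mpr ?_
  rintro x (rfl | hxi) (hxj | hxj)
  · exact hij (cfg.inj hxj)
  · exact v_notMem_U hj i hxj
  · exact v_notMem_U hi j (hxj ▸ hxi)
  · exact Set.disjoint_left.mp (cfg.hUdisj i hi j hj hij) hxi hxj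

lemma exists_bridge {i j : Fin 5} (hi : i ∈ cfg.A1 ∪ cfg.A2) (hj : j ∈ cfg.A1 ∪ cfg.A2)
    (hij : i ≠ j) (hadj : G.Adj (cfg.v i) (cfg.v j)) :
    ∃ R : G.Subgraph, IsPathSubgraph R ∧ 6 ≤ R.verts.ncard ∧
      R.verts ⊆ cfg.block i ∪ cfg.block j := by
  have hQQ : Disjoint (cfg.Q i).verts (cfg.Q j).verts :=
    (cfg.disjoint_block hi hj hij).mono (cfg.hQverts i hi) (cfg.hQverts j hj)
  obtain ⟨R, hR, hRverts⟩ := (cfg.hQpath i hi).exists_join (cfg.hQpath j hj) (cfg.hQend i hi)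
    (cfg.hQend j hj) hadj hQQ
  have hQi := cfg.hQcard i hi
  have hQj := cfg.hQcard j hj
  refine ⟨R, hR, ?_, hRverts ▸ Set.union_subset_union (cfg.hQverts i hi) (cfg.hQverts j hj)⟩
  rw [hRverts, Set.ncard_union_eq hQQ (Set.finite_of_ncard_pos (by omega))
    (Set.finite_of_ncard_pos (by omega))]
  omega

lemma hasDisjointPathCover_of_le_five_mul {N : ℕ} (hN : N ≤ 5 * cfg.A2.card) :
    HasDisjointPathCover G N := by
  refine hasDisjointPathCover_of_pairwiseDisjoint cfg.A2 cfg.P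
    (fun i hi => ⟨cfg.hPpath i hi, (by omega : 4 ≤ 5).trans (cfg.hPcard i hi)⟩)
    (fun i hi j hj hij => (cfg.disjoint_block (Finset.mem_union_right _ hi)
      (Finset.mem_union_right _ hj) hij).mono (cfg.hPverts i hi) (cfg.hPverts j hj)) ?_
  calc N ≤ cfg.A2.card • 5 := by rw [smul_eq_mul]; omega
    _ ≤ _ := Finset.card_nsmul_le_sum _ _ _ cfg.hPcard

lemma hasDisjointPathCover_of_two_bridges (hu : cfg.A1 ∪ cfg.A2 = Finset.univ)
    {a b c d k : Fin 5} (hab : G.Adj (cfg.v a) (cfg.v b)) (hcd : G.Adj (cfg.v c) (cfg.v d))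
    (hk : k ∈ cfg.A2) (hnodup : [a, b, c, d, k].Nodup) : HasDisjointPathCover G 17 := by
  simp only [List.nodup_cons, List.mem_cons, List.not_mem_nil, or_false, not_or,
    List.nodup_nil, and_true, not_false_eq_true] at hnodup
  obtain ⟨⟨hab', hac, had, hak⟩, ⟨hbc, hbd, hbk⟩, ⟨hcd', hck⟩, hdk⟩ := hnodup
  have mem : ∀ i, i ∈ cfg.A1 ∪ cfg.A2 := fun i => hu ▸ Finset.mem_univ i
  have hdisj : ∀ {i j}, i ≠ j → Disjoint (cfg.block i) (cfg.block j) := fun hij =>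
    cfg.disjoint_block (mem _) (mem _) hij
  obtain ⟨R₁, hR₁, hR₁card, hR₁sub⟩ := cfg.exists_bridge (mem a) (mem b) hab' hab
  obtain ⟨R₂, hR₂, hR₂card, hR₂sub⟩ := cfg.exists_bridge (mem c) (mem d) hcd' hcd
  have hP := cfg.hPverts k hk
  have h₁₂ : Disjoint R₁.verts R₂.verts :=
    (((hdisj hac).union_right (hdisj had)).union_left
      ((hdisj hbc).union_right (hdisj hbd))).mono hR₁sub hR₂sub
  have h₁₃ : Disjoint R₁.verts (cfg.P k).verts :=
    ((hdisj hak).union_left (hdisj hbk)).mono hR₁sub hP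
  have h₂₃ : Disjoint R₂.verts (cfg.P k).verts :=
    ((hdisj hck).union_left (hdisj hdk)).mono hR₂sub hP
  have hPk := cfg.hPcard k hk
  refine hasDisjointPathCover_of_pairwiseDisjoint Finset.univ ![R₁, R₂, cfg.P k] ?_ ?_ ?_
  · intro i _
    fin_cases i <;> dsimp
    exacts [⟨hR₁, by omega⟩, ⟨hR₂, by omega⟩, ⟨cfg.hPpath k hk, by omega⟩]
  · intro i _ j _ hij
    fin_cases i <;> fin_cases j <;> first
      | exact absurd rfl hij | assumption | exact Disjoint.symm ‹_›
  · simp only [Fin.sum_univ_three, Matrix.cons_val_zero, Matrix.cons_val_one,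
      Matrix.cons_val_two, Matrix.tail_cons, Matrix.head_cons]
    omega

lemma hasDisjointPathCover_seventeen_of_anchors_eq_univ (hu : cfg.A1 ∪ cfg.A2 = Finset.univ)
    (h3 : cfg.A2.card = 3) : HasDisjointPathCover G 17 := by
  have hA1 : cfg.A1.card = 2 := by
    have := Finset.card_union_of_disjoint cfg.hA
    rw [hu, Finset.card_univ, Fintype.card_fin] at this
    omega
  obtain ⟨k, hk, hkA1⟩ : ∃ k ∈ ({0, 2, 4} : Finset (Fin 5)), k ∉ cfg.A1 := by
    by_contra! h
    have := Finset.card_le_card h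
    rw [hA1] at this
    exact absurd this (by decide)
  have hkA2 : k ∈ cfg.A2 := by
    simpa [hkA1] using (hu ▸ Finset.mem_univ k : k ∈ cfg.A1 ∪ cfg.A2)
  simp only [Finset.mem_insert, Finset.mem_singleton] at hk
  rcases hk with rfl | rfl | rfl
  · exact cfg.hasDisjointPathCover_of_two_bridges hu (cfg.adj 1) (cfg.adj 3) hkA2 (by decide)
  · exact cfg.hasDisjointPathCover_of_two_bridges hu (cfg.adj 0) (cfg.adj 3) hkA2 (by decide)
  · exact cfg.hasDisjointPathCover_of_two_bridges hu (cfg.adj 0) (cfg.adj 2) hkA2 (by decide)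

end FivePathConfig

theorem stmt10_general {V : Type*} (G : SimpleGraph V)
    (cfg : FivePathConfig G) :
    (cfg.A2.card = 5 → HasDisjointPathCover G 25) ∧
    (cfg.A2.card = 4 → HasDisjointPathCover G 20) ∧
    (cfg.A2.card = 3 → HasDisjointPathCover G 15 ∧
      (cfg.A1 ∪ cfg.A2 = Finset.univ → HasDisjointPathCover G 17)) :=
  ⟨fun h => cfg.hasDisjointPathCover_of_le_five_mul (by omega),
    fun h => cfg.hasDisjointPathCover_of_le_five_mul (by omega),
    fun h => ⟨cfg.hasDisjointPathCover_of_le_five_mul (by omega),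
      fun hu => cfg.hasDisjointPathCover_seventeen_of_anchors_eq_univ hu h⟩⟩

/-- a 5-path-center configuration yields vertex-disjoint `4⁺`-paths
covering at least 25 vertices if `|A2| = 5`, at least 20 if `|A2| = 4`, and at least 15
if `|A2| = 3` — at least 17 in the latter case when moreover `A1 ∪ A2 = {1,…,5}`. -/
theorem stmt10 {V : Type*} [Fintype V] [DecidableEq V] (G : SimpleGraph V)
    (cfg : FivePathConfig G) :
    (cfg.A2.card = 5 → HasDisjointPathCover G 25) ∧
    (cfg.A2.card = 4 → HasDisjointPathCover G 20) ∧
    (cfg.A2.card = 3 → HasDisjointPathCover G 15 ∧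
      (cfg.A1 ∪ cfg.A2 = Finset.univ → HasDisjointPathCover G 17)) :=
  stmt10_general G cfg
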